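/- Let Q be a commutative ring and V a Q-module, with tensor algebra T(V). The sequence of T(V)-bimodules 0 → T(V) ⊗_Q V ⊗_Q T(V) → T(V) ⊗_Q T(V) → T(V) → 0 is exact, where the first nontrivial map is ι(x ⊗ v ⊗ y) = (x·v) ⊗ y − x ⊗ (v·y) for x, y ∈ T(V) and v ∈ V (with x·v and v·y computed by the multiplication of T(V)), and the second is the multiplication map μ(x ⊗ y) = xy. -/
import Mathlib


open scoped TensorProduct

namespace Statement9Aux

variable (Q : Type) [CommRing Q] (V : Type) [AddCommGroup V] [Module Q V]

local notation "A" => TensorAlgebra Q V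
local notation "M" => TensorAlgebra Q V ⊗[Q] (V ⊗[Q] TensorAlgebra Q V)
local notation "W" => TensorAlgebra Q V × TensorAlgebra Q V ⊗[Q] (V ⊗[Q] TensorAlgebra Q V)
local notation "ιQ" => TensorAlgebra.ι Q

/-- The basic bilinear map `V × W → W`. -/
noncomputable def g : V →ₗ[Q] Module.End Q W :=
  LinearMap.mk₂ Q
    (fun v p => (ιQ v * p.1, (1 : A) ⊗ₜ[Q] (v ⊗ₜ[Q] p.1) + ιQ v • p.2))
    (by
      intro v v' p
      simp [add_mul, TensorProduct.add_tmul, TensorProduct.tmul_add, add_smul, Prod.ext_iff]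
      abel)
    (by
      intro q v p
      simp [Prod.ext_iff, smul_mul_assoc, TensorProduct.tmul_smul, smul_smul,
        TensorProduct.smul_tmul, smul_add, smul_assoc])
    (by
      intro v p p'
      simp [mul_add, TensorProduct.tmul_add, smul_add, Prod.ext_iff]
      abel)
    (by
      intro q v p
      simp [Prod.ext_iff, mul_smul_comm, TensorProduct.tmul_smul, smul_comm q (ιQ v)])

noncomputable def F : A →ₐ[Q] Module.End Q W := TensorAlgebra.lift Q (g Q V)

@[simp] lemma F_ι (v : V) (p : W) :
    F Q V (ιQ v) p = (ιQ v * p.1, (1 : A) ⊗ₜ[Q] (v ⊗ₜ[Q] p.1) + ιQ v • p.2) := by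
  rw [F, TensorAlgebra.lift_ι_apply]
  rfl

@[simp] lemma F_algebraMap (q : Q) (p : W) : F Q V (algebraMap Q A q) p = q • p := by
  rw [AlgHom.commutes]
  rfl

lemma L1 : ∀ (a : A) (p : W), (F Q V a p).1 = a * p.1 := by
  intro a
  induction a using TensorAlgebra.induction with
  | algebraMap q => intro p; simp [Algebra.smul_def]
  | ι v => intro p; simp
  | mul a b ha hb => intro p; simp [map_mul, Module.End.mul_apply, ha, hb, mul_assoc]
  | add a b ha hb => intro p; simp [map_add, ha, hb, add_mul]

lemma L2 : ∀ (a : A) (y : A) (m : M),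
    (F Q V a (y, m)).2 = (F Q V a (y, 0)).2 + a • m := by
  intro a
  induction a using TensorAlgebra.induction with
  | algebraMap q => intro y m; simp [algebraMap_smul]
  | ι v => intro y m; simp
  | mul a b ha hb =>
      intro y m
      obtain ⟨n, hn⟩ : ∃ n, (F Q V b (y, 0)).2 = n := ⟨_, rfl⟩
      have hb' : F Q V b (y, m) = (b * y, n + b • m) :=
        Prod.ext (L1 Q V b (y, m)) (by rw [hb y m, hn])
      have hb0 : F Q V b (y, 0) = (b * y, n) := Prod.ext (L1 Q V b (y, 0)) hn
      rw [map_mul, Module.End.mul_apply, Module.End.mul_apply, hb', hb0,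
        ha (b * y) (n + b • m), ha (b * y) n, smul_add, smul_smul]
      abel
  | add a b ha hb =>
      intro y m
      simp only [map_add, LinearMap.add_apply, Prod.snd_add, ha y m, hb y m, add_smul]
      abel

/-- Right multiplication by `y` on the last tensor factor. -/
noncomputable def ρ (y : A) : M →ₗ[Q] M :=
  LinearMap.lTensor A (LinearMap.lTensor V (LinearMap.mulRight Q y))

lemma ρ_tmul (y x : A) (v : V) (b : A) :
    ρ Q V y (x ⊗ₜ[Q] (v ⊗ₜ[Q] b)) = x ⊗ₜ[Q] (v ⊗ₜ[Q] (b * y)) := by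
  simp [ρ]

lemma ρ_smul (y a : A) (m : M) : ρ Q V y (a • m) = a • ρ Q V y m := by
  induction m using TensorProduct.induction_on with
  | zero => simp
  | tmul x n =>
      rw [TensorProduct.smul_tmul']
      simp only [ρ, LinearMap.lTensor_tmul]
      rw [TensorProduct.smul_tmul']
  | add m₁ m₂ h₁ h₂ => simp [smul_add, h₁, h₂]

lemma ρ_mul (b y : A) (m : M) : ρ Q V (b * y) m = ρ Q V y (ρ Q V b m) := by
  induction m using TensorProduct.induction_on with
  | zero => simp
  | tmul x n =>
      induction n using TensorProduct.induction_on with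
      | zero => simp
      | tmul v c => simp [ρ_tmul, mul_assoc]
      | add n₁ n₂ h₁ h₂ =>
          simp only [TensorProduct.tmul_add, map_add] at *
          rw [h₁, h₂]
  | add m₁ m₂ h₁ h₂ => simp only [map_add]; rw [h₁, h₂]

lemma L3 : ∀ (a : A) (y : A), (F Q V a (y, 0)).2 = ρ Q V y (F Q V a (1, 0)).2 := by
  intro a
  induction a using TensorAlgebra.induction with
  | algebraMap q => intro y; simp
  | ι v => intro y; simp [ρ_tmul]
  | mul a b ha hb =>
      intro y
      obtain ⟨Db, hDb⟩ : ∃ n, (F Q V b (1, 0)).2 = n := ⟨_, rfl⟩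
      obtain ⟨n, hn⟩ : ∃ n, (F Q V b (y, 0)).2 = n := ⟨_, rfl⟩
      have hb' : F Q V b (y, 0) = (b * y, n) := Prod.ext (L1 Q V b (y, 0)) hn
      have hb1 : F Q V b (1, 0) = (b, Db) := Prod.ext (by rw [L1]; simp) hDb
      have hnn : n = ρ Q V y Db := by rw [← hn, hb y, hDb]
      rw [map_mul, Module.End.mul_apply, Module.End.mul_apply, hb', hb1,
        L2 Q V a (b * y) n, L2 Q V a b Db, ha (b * y), ha b, hnn, map_add,
        ρ_mul, ρ_smul]
  | add a b ha hb =>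
      intro y
      simp only [map_add, LinearMap.add_apply, Prod.snd_add, ha y, hb y, map_add]

/-- `D a = (F a (1,0)).2`, the universal derivation. -/
noncomputable def D : A →ₗ[Q] M where
  toFun a := (F Q V a (1, 0)).2
  map_add' a b := by simp [map_add]
  map_smul' q a := by simp [map_smul]

lemma D_apply (a : A) : D Q V a = (F Q V a (1, 0)).2 := rfl

lemma D_ι_mul (v : V) (y : A) :
    D Q V (ιQ v * y) = (1 : A) ⊗ₜ[Q] (v ⊗ₜ[Q] y) + ιQ v • D Q V y := by
  have hy : F Q V y (1, 0) = (y, D Q V y) :=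
    Prod.ext (by rw [L1]; simp) rfl
  rw [D_apply, map_mul, Module.End.mul_apply, hy, F_ι]

lemma D_algebraMap (q : Q) : D Q V (algebraMap Q A q) = 0 := by
  simp [D_apply]

lemma D_mul (a b : A) : D Q V (a * b) = ρ Q V b (D Q V a) + a • D Q V b := by
  have hb : F Q V b (1, 0) = (b, D Q V b) :=
    Prod.ext (by rw [L1]; simp) rfl
  have key : D Q V (a * b) = (F Q V a (b, D Q V b)).2 := by
    rw [D_apply, map_mul, Module.End.mul_apply, hb]
  rw [key, L2 Q V a b (D Q V b), L3 Q V a b, ← D_apply]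

/-- The contracting homotopy `h (x ⊗ y) = x • D y`. -/
noncomputable def hmap : A ⊗[Q] A →ₗ[Q] M :=
  TensorProduct.lift (LinearMap.mk₂ Q (fun x y => x • D Q V y)
    (fun x x' y => add_smul x x' (D Q V y))
    (fun q x y => smul_assoc q x (D Q V y))
    (fun x y y' => by simp only [map_add, smul_add])
    (fun q x y => by simp only [map_smul]; exact smul_comm x q (D Q V y)))

lemma hmap_tmul (x y : A) : hmap Q V (x ⊗ₜ[Q] y) = x • D Q V y := rfl

lemma smul_one_tmul (x : A) (n : V ⊗[Q] A) : x • ((1 : A) ⊗ₜ[Q] n) = x ⊗ₜ[Q] n := by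
  rw [TensorProduct.smul_tmul', smul_eq_mul, mul_one]

section WithIota

variable (ι : TensorAlgebra Q V ⊗[Q] (V ⊗[Q] TensorAlgebra Q V) →ₗ[Q]
      TensorAlgebra Q V ⊗[Q] TensorAlgebra Q V)
    (hι : ∀ (x y : TensorAlgebra Q V) (v : V),
      ι (x ⊗ₜ[Q] (v ⊗ₜ[Q] y)) =
        (x * TensorAlgebra.ι Q v) ⊗ₜ[Q] y - x ⊗ₜ[Q] (TensorAlgebra.ι Q v * y))

/-- `σ y` : right multiplication by `y` on the second factor of `A ⊗ A`. -/
noncomputable def σ (y : A) : A ⊗[Q] A →ₗ[Q] A ⊗[Q] A :=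
  LinearMap.lTensor A (LinearMap.mulRight Q y)

include hι in
lemma iota_rho (y : A) (m : M) : ι (ρ Q V y m) = σ Q V y (ι m) := by
  induction m using TensorProduct.induction_on with
  | zero => simp
  | tmul x n =>
      induction n using TensorProduct.induction_on with
      | zero => simp
      | tmul v b => simp [ρ_tmul, hι, σ, mul_assoc]
      | add n₁ n₂ h₁ h₂ =>
          simp only [TensorProduct.tmul_add, map_add] at *
          rw [h₁, h₂]
  | add m₁ m₂ h₁ h₂ => simp only [map_add]; rw [h₁, h₂]

include hι in
lemma iota_smul_D (y : A) : ∀ (x : A),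
    ι (x • D Q V y) = (x * y) ⊗ₜ[Q] (1 : A) - x ⊗ₜ[Q] y := by
  induction y using TensorAlgebra.induction with
  | algebraMap q =>
      intro x
      rw [D_algebraMap, smul_zero, map_zero, Algebra.algebraMap_eq_smul_one,
        mul_smul_comm, mul_one, TensorProduct.tmul_smul,
        ← TensorProduct.smul_tmul', sub_self]
  | ι v =>
      intro x
      have : D Q V (ιQ v) = (1 : A) ⊗ₜ[Q] (v ⊗ₜ[Q] (1 : A)) := by
        have h := D_ι_mul Q V v 1
        simp only [mul_one] at h
        rw [h, D_apply]
        simp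
      rw [this, smul_one_tmul, hι, mul_one]
  | mul a b ha hb =>
      intro x
      rw [D_mul, smul_add, map_add, ← ρ_smul, iota_rho Q V ι hι, ha, smul_smul, hb]
      simp only [map_sub, σ, LinearMap.lTensor_tmul, LinearMap.mulRight_apply, one_mul]
      rw [mul_assoc]
      abel
  | add a b ha hb =>
      intro x
      rw [map_add, smul_add, map_add, ha, hb]
      simp only [mul_add, TensorProduct.tmul_add, TensorProduct.add_tmul]
      abel

include hι in
lemma iota_hmap (z : A ⊗[Q] A) :
    ι (hmap Q V z) = (LinearMap.mul' Q A z) ⊗ₜ[Q] (1 : A) - z := by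
  induction z using TensorProduct.induction_on with
  | zero => simp
  | tmul x y => rw [hmap_tmul, iota_smul_D Q V ι hι]; simp
  | add z₁ z₂ h₁ h₂ =>
      simp only [map_add] at *
      rw [h₁, h₂, TensorProduct.add_tmul]
      abel

include hι in
lemma hmap_iota (m : M) : hmap Q V (ι m) = -m := by
  induction m using TensorProduct.induction_on with
  | zero => simp
  | tmul x n =>
      induction n using TensorProduct.induction_on with
      | zero => simp
      | tmul v y =>
          rw [hι, map_sub, hmap_tmul, hmap_tmul, D_ι_mul, smul_add, smul_one_tmul,
            smul_smul]
          abel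
      | add n₁ n₂ h₁ h₂ =>
          simp only [TensorProduct.tmul_add, map_add] at *
          rw [h₁, h₂]; abel
  | add m₁ m₂ h₁ h₂ =>
      simp only [map_add] at *
      rw [h₁, h₂]; abel

include hι in
lemma mul_iota (m : M) : LinearMap.mul' Q A (ι m) = 0 := by
  induction m using TensorProduct.induction_on with
  | zero => simp
  | tmul x n =>
      induction n using TensorProduct.induction_on with
      | zero => simp
      | tmul v y => rw [hι]; simp [mul_assoc]
      | add n₁ n₂ h₁ h₂ =>
          simp only [TensorProduct.tmul_add, map_add] at *
          rw [h₁, h₂]; simp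
  | add m₁ m₂ h₁ h₂ =>
      simp only [map_add] at *
      rw [h₁, h₂]; simp

end WithIota

end Statement9Aux

/-- For a commutative ring `Q` and a `Q`-module `V`, the sequence of
`T(V)`-bimodules `0 → T(V) ⊗ V ⊗ T(V) → T(V) ⊗ T(V) → T(V) → 0` is exact, where the
first map is `ι(x ⊗ v ⊗ y) = (x·v) ⊗ y − x ⊗ (v·y)` and the second is multiplication. -/
theorem statement_9 (Q : Type) [CommRing Q] (V : Type) [AddCommGroup V] [Module Q V]
    (ι : TensorAlgebra Q V ⊗[Q] (V ⊗[Q] TensorAlgebra Q V) →ₗ[Q]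
      TensorAlgebra Q V ⊗[Q] TensorAlgebra Q V)
    (hι : ∀ (x y : TensorAlgebra Q V) (v : V),
      ι (x ⊗ₜ[Q] (v ⊗ₜ[Q] y)) =
        (x * TensorAlgebra.ι Q v) ⊗ₜ[Q] y - x ⊗ₜ[Q] (TensorAlgebra.ι Q v * y)) :
    Function.Injective ι ∧
    Function.Exact ι (LinearMap.mul' Q (TensorAlgebra Q V)) ∧
    Function.Surjective (LinearMap.mul' Q (TensorAlgebra Q V)) := by
  have hι' : ∀ (x y : TensorAlgebra Q V) (v : V),
      ι (x ⊗ₜ[Q] (v ⊗ₜ[Q] y)) =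
        (x * TensorAlgebra.ι Q v) ⊗ₜ[Q] y - x ⊗ₜ[Q] (TensorAlgebra.ι Q v * y) :=
    fun x y v => hι x y v
  refine ⟨?_, ?_, ?_⟩
  · intro m₁ m₂ hm
    have h₁ := Statement9Aux.hmap_iota Q V ι (fun x y v => hι x y v) m₁
    have h₂ := Statement9Aux.hmap_iota Q V ι (fun x y v => hι x y v) m₂
    rw [hm, h₂] at h₁
    exact (neg_injective h₁).symm
  · intro z
    constructor
    · intro hz
      refine ⟨-(Statement9Aux.hmap Q V z), ?_⟩
      have := Statement9Aux.iota_hmap Q V ι (fun x y v => hι x y v) z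
      rw [map_neg, this, hz]
      simp
    · rintro ⟨m, rfl⟩
      exact Statement9Aux.mul_iota Q V ι (fun x y v => hι x y v) m
  · intro x
    exact ⟨x ⊗ₜ[Q] 1, by simp⟩
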